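/- arXiv:1706.04801 — 7 statements merged into one kernel-verified Lean document; each statement's English description precedes it below -/
import Mathlib

section
/- Let K be a field of characteristic different from 2 and let D ∈ K[X] be a non-constant polynomial. If there exist p, q ∈ K[X] with q ≠ 0 and p² − D·q² = 1, then the degree of D is even, the leading coefficient of D is a square in K, and D is not a square in K[X]. -/
/-!
If `p² - D q² = 1` with `q ≠ 0` and `deg D > 0`, then `p²` and `D q²` differ by a constant of
smaller degree, so they have the same degree and leading coefficient: `2 deg p = deg D + 2 deg q`
and `lc(p)² = lc(D) lc(q)²`. If `D = E²`, then `(p - E q)(p + E q) = 1` makes both factors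
constants, hence so is their difference `2 E q`, which is impossible when `2 ≠ 0` and `deg E > 0`.
-/

open Polynomial

namespace Polynomial

variable {R : Type*} [CommRing R] [IsDomain R]

theorem natDegree_eq_zero_of_isUnit_add_of_isUnit_sub {a b : R[X]} (h2 : (2 : R) ≠ 0)
    (hadd : IsUnit (a + b)) (hsub : IsUnit (a - b)) : b.natDegree = 0 := by
  have htwo : (a + b) - (a - b) = C 2 * b := by rw [C_ofNat]; ring
  have hle := natDegree_sub_le (a + b) (a - b)
  rw [htwo, natDegree_C_mul h2, natDegree_eq_zero_of_isUnit hadd,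
    natDegree_eq_zero_of_isUnit hsub] at hle
  omega

section Pell

variable {D p q : R[X]}

theorem degree_one_lt_degree_mul_sq (hD : 0 < D.degree) (hq : q ≠ 0) :
    (1 : R[X]).degree < (D * q ^ 2).degree := by
  rw [degree_one, degree_mul]
  exact lt_add_of_lt_of_nonneg hD (zero_le_degree_iff.mpr (pow_ne_zero 2 hq))

theorem natDegree_sq_eq_of_pell (hD : 0 < D.degree) (hq : q ≠ 0)
    (hpell : p ^ 2 - D * q ^ 2 = 1) :
    2 * p.natDegree = D.natDegree + 2 * q.natDegree := by
  have hD0 : D ≠ 0 := ne_zero_of_degree_gt hD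
  rw [← natDegree_pow, ← natDegree_pow, ← natDegree_mul hD0 (pow_ne_zero 2 hq),
    sub_eq_iff_eq_add.mp hpell,
    natDegree_add_eq_right_of_degree_lt (degree_one_lt_degree_mul_sq hD hq)]

theorem leadingCoeff_sq_eq_of_pell (hD : 0 < D.degree) (hq : q ≠ 0)
    (hpell : p ^ 2 - D * q ^ 2 = 1) :
    p.leadingCoeff ^ 2 = D.leadingCoeff * q.leadingCoeff ^ 2 := by
  rw [← leadingCoeff_pow, ← leadingCoeff_pow, ← leadingCoeff_mul, sub_eq_iff_eq_add.mp hpell,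
    leadingCoeff_add_of_degree_lt (degree_one_lt_degree_mul_sq hD hq)]

theorem even_natDegree_of_pell (hD : 0 < D.degree) (hq : q ≠ 0)
    (hpell : p ^ 2 - D * q ^ 2 = 1) : Even D.natDegree :=
  ⟨p.natDegree - q.natDegree, by have := natDegree_sq_eq_of_pell hD hq hpell; omega⟩

theorem not_isSquare_of_pell (h2 : (2 : R) ≠ 0) (hD : 0 < D.degree) (hq : q ≠ 0)
    (hpell : p ^ 2 - D * q ^ 2 = 1) : ¬ IsSquare D := by
  rintro ⟨E, rfl⟩
  have hunit : (p + E * q) * (p - E * q) = 1 := by linear_combination hpell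
  have hEq : (E * q).natDegree = 0 :=
    natDegree_eq_zero_of_isUnit_add_of_isUnit_sub h2 (.of_mul_eq_one _ hunit)
      (.of_mul_eq_one_right _ hunit)
  have hE : E ≠ 0 := by rintro rfl; simp at hD
  rw [natDegree_mul hE hq] at hEq
  have hEpos : 0 < E.natDegree := by
    have := natDegree_pos_iff_degree_pos.mpr hD
    rw [natDegree_mul hE hE] at this
    omega
  omega

end Pell

theorem isSquare_leadingCoeff_of_pell {K : Type*} [Field K] {D p q : K[X]} (hD : 0 < D.degree)
    (hq : q ≠ 0) (hpell : p ^ 2 - D * q ^ 2 = 1) : IsSquare D.leadingCoeff := by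
  have hlc := leadingCoeff_sq_eq_of_pell hD hq hpell
  have hq' : q.leadingCoeff ≠ 0 := leadingCoeff_ne_zero.mpr hq
  refine ⟨p.leadingCoeff / q.leadingCoeff, ?_⟩
  field_simp
  linear_combination -hlc

end Polynomial

/-- If the polynomial Pell equation `p² - D q² = 1` has a non-trivial solution for a
non-constant `D`, then `D` has even degree, square leading coefficient, and is not a square. -/
theorem polyPell_necessary_conditions {K : Type*} [Field K] (h2 : (2 : K) ≠ 0)
    (D : Polynomial K) (hD : 0 < D.degree)
    (p q : Polynomial K) (hq : q ≠ 0) (hpell : p ^ 2 - D * q ^ 2 = 1) :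
    Even D.natDegree ∧ (∃ c : K, D.leadingCoeff = c ^ 2) ∧
      ¬ ∃ E : Polynomial K, D = E ^ 2 := by
  refine ⟨even_natDegree_of_pell hD hq hpell, ?_, ?_⟩
  · obtain ⟨c, hc⟩ := isSquare_leadingCoeff_of_pell hD hq hpell
    exact ⟨c, by rw [hc, sq]⟩
  · rintro ⟨E, hE⟩
    exact not_isSquare_of_pell h2 hD hq hpell ⟨E, by rw [hE, sq]⟩
end

section
/- Let K be a field of characteristic different from 2 and let D ∈ K[X] be a polynomial of degree 2 whose leading coefficient is a square in K and which is not a square in K[X]. Then D is Pellian: there exist p, q ∈ K[X] with q ≠ 0 and p² − D·q² = 1. -/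
/-!
Completing the square writes `D = L² + r` with `L` linear and `r ∈ K` a nonzero constant
(`r = 0` would make `D` a square). Whenever `r u = 2`, the identity
`(u L² + 1)² - (L² + r) (u L)² = 1` holds in any commutative ring; take `u = 2 / r`.
-/

open Polynomial

theorem sq_sub_mul_sq_eq_one_of_mul_eq_two {R : Type*} [CommRing R] (L : R) {r u : R}
    (hru : r * u = 2) : (u * L ^ 2 + 1) ^ 2 - (L ^ 2 + r) * (u * L) ^ 2 = 1 := by
  linear_combination (-(u * L ^ 2)) * hru

theorem exists_pell_solution_of_eq_sq_add_C {K : Type*} [Field K] (h2 : (2 : K) ≠ 0)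
    {L : K[X]} (hL : L ≠ 0) {r : K} (hr : r ≠ 0) :
    ∃ p q : K[X], q ≠ 0 ∧ p ^ 2 - (L ^ 2 + C r) * q ^ 2 = 1 := by
  have hru : C r * C (2 / r) = 2 := by
    rw [← C_mul, mul_div_cancel₀ _ hr, C_ofNat]
  refine ⟨C (2 / r) * L ^ 2 + 1, C (2 / r) * L, ?_, sq_sub_mul_sq_eq_one_of_mul_eq_two L hru⟩
  exact mul_ne_zero (C_ne_zero.mpr (div_ne_zero h2 hr)) hL

theorem exists_eq_sq_add_C_of_degree_eq_two {K : Type*} [Field K] (h2 : (2 : K) ≠ 0)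
    {D : K[X]} (hdeg : D.degree = 2) {c : K} (hc : D.leadingCoeff = c ^ 2) :
    ∃ (L : K[X]) (r : K), D = L ^ 2 + C r := by
  have hc2 : D.coeff 2 = c ^ 2 := by
    rw [← hc, leadingCoeff, natDegree_eq_of_degree_eq_some hdeg]
  have hc0 : c ≠ 0 := by
    rintro rfl
    rw [zero_pow two_ne_zero, leadingCoeff_eq_zero] at hc
    simp [hc] at hdeg
  set e := D.coeff 1 / (2 * c)
  have hb : D.coeff 1 = 2 * c * e := (mul_div_cancel₀ _ (mul_ne_zero h2 hc0)).symm
  refine ⟨C c * X + C e, D.coeff 0 - e ^ 2, ?_⟩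
  conv_lhs => rw [eq_quadratic_of_degree_le_two hdeg.le, hc2, hb]
  simp only [C_mul, C_sub, C_pow, C_ofNat]
  ring

/-- A non-square polynomial of degree 2 with square leading coefficient is always Pellian. -/
theorem deg_two_always_pellian {K : Type*} [Field K] (h2 : (2 : K) ≠ 0)
    (D : Polynomial K) (hdeg : D.degree = 2)
    (hlc : ∃ c : K, D.leadingCoeff = c ^ 2)
    (hns : ¬ ∃ E : Polynomial K, D = E ^ 2) :
    ∃ p q : Polynomial K, q ≠ 0 ∧ p ^ 2 - D * q ^ 2 = 1 := by
  obtain ⟨c, hc⟩ := hlc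
  obtain ⟨L, r, hD⟩ := exists_eq_sq_add_C_of_degree_eq_two h2 hdeg hc
  have hL : L ≠ 0 := by
    rintro rfl
    simpa [hD] using natDegree_eq_of_degree_eq_some hdeg
  have hr : r ≠ 0 := by
    rintro rfl
    exact hns ⟨L, by simpa using hD⟩
  rw [hD]
  exact exists_pell_solution_of_eq_sq_add_C h2 hL hr
end

section
/- Let K be a field of characteristic different from 2 and let D ∈ K[X] be a nonzero polynomial of even degree whose leading coefficient is a square in K. Then ι D is a square in the field K((T)) of formal Laurent series, i.e. there exists δ ∈ K((T)) with δ² = ι D. -/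
/-!
Reversing `D` turns `ι D` into `T^(-deg D)` times a power series `D.reverse` whose constant
coefficient is the leading coefficient `c²` of `D`. Since `2c` is a unit, Hensel's lemma in the
`X`-adically complete ring `K⟦X⟧` gives a square root `g` of `D.reverse`, and as `deg D = 2m`
is even, `δ = T^(-m) g` squares to `ι D`.
-/

open Polynomial

/-- The ring homomorphism `K[X] → K((T))` sending `X` to `T⁻¹`. -/
noncomputable def iota {K : Type*} [Field K] : Polynomial K →+* LaurentSeries K :=
  Polynomial.eval₂RingHom (HahnSeries.C : K →+* LaurentSeries K)
    (HahnSeries.single (-1 : ℤ) (1 : K))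

theorem HenselianRing.isSquare_of_sub_sq_mem {R : Type*} [CommRing R] {I : Ideal R}
    [HenselianRing R I] {a b : R} (hab : a - b ^ 2 ∈ I) (hb : IsUnit (2 * b)) : IsSquare a := by
  have hmonic : (X ^ 2 - C a).Monic := monic_X_pow_sub_C a two_ne_zero
  have hroot : (X ^ 2 - C a).eval b ∈ I := by
    simpa using I.neg_mem hab
  have hderiv : (X ^ 2 - C a).derivative.eval b = 2 * b := by
    simp only [derivative_sub, derivative_X_pow, derivative_C, eval_sub, eval_mul, eval_C, eval_pow,
      eval_X]
    norm_num
  have hsimple : IsUnit (Ideal.Quotient.mk I ((X ^ 2 - C a).derivative.eval b)) :=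
    hderiv ▸ hb.map _
  obtain ⟨r, hr, -⟩ := HenselianRing.is_henselian _ hmonic b hroot hsimple
  refine ⟨r, ?_⟩
  have hr' := hr.eq_zero
  simp only [eval_sub, eval_pow, eval_X, eval_C] at hr'
  linear_combination -hr'

theorem PowerSeries.isSquare_of_constantCoeff_eq_sq {R : Type*} [CommRing R] {f : PowerSeries R}
    {c : R} (hf : constantCoeff f = c ^ 2) (hc : IsUnit (2 * c)) : IsSquare f := by
  refine HenselianRing.isSquare_of_sub_sq_mem (I := Ideal.span {X}) (b := C c) ?_ ?_
  · rw [Ideal.mem_span_singleton, X_dvd_iff]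
    simp [hf]
  · simpa only [map_mul, map_ofNat] using hc.map (C (R := R))

theorem HahnSeries.ofPowerSeries_coe_eq_eval₂ {R : Type*} [CommSemiring R] (p : R[X]) :
    HahnSeries.ofPowerSeries ℤ R (p : PowerSeries R) =
      p.eval₂ HahnSeries.C (HahnSeries.single 1 1) := by
  let ψ : R[X] →+* LaurentSeries R := (HahnSeries.ofPowerSeries ℤ R).comp
    (Polynomial.coeToPowerSeries.ringHom)
  show ψ p = eval₂RingHom HahnSeries.C (HahnSeries.single 1 1) p
  congr 1
  ext <;> simp [ψ]

theorem iota_mul_single_eq_ofPowerSeries_reflect {K : Type*} [Field K] {D : K[X]} {N : ℕ}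
    (hN : D.natDegree ≤ N) :
    iota D * HahnSeries.single (N : ℤ) 1 =
      HahnSeries.ofPowerSeries ℤ K (D.reflect N : PowerSeries K) := by
  let T : LaurentSeries K := HahnSeries.single 1 1
  let : Invertible T := invertibleOfNonzero (by simp [T])
  have hinv : ⅟T = HahnSeries.single (-1) 1 :=
    invOf_eq_right_inv (by simp [T, HahnSeries.single_mul_single])
  have hdeg : (D.reflect N).natDegree ≤ N := natDegree_reflect_le.trans (by simp [hN])
  have key := eval₂_reflect_mul_pow HahnSeries.C T N (D.reflect N) hdeg
  rw [reflect_reflect, hinv] at key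
  rw [HahnSeries.ofPowerSeries_coe_eq_eval₂, ← key]
  simp [T, iota, HahnSeries.single_pow]

/-- A nonzero polynomial of even degree with square leading coefficient becomes a square
in the Laurent series field `K((T))` (with `X ↦ T⁻¹`). -/
theorem sqrt_exists_in_laurentSeries {K : Type*} [Field K] (h2 : (2 : K) ≠ 0)
    (D : Polynomial K) (hD0 : D ≠ 0) (hdeg : Even D.natDegree)
    (hlc : ∃ c : K, D.leadingCoeff = c ^ 2) :
    ∃ δ : LaurentSeries K, δ ^ 2 = iota D := by
  obtain ⟨c, hc⟩ := hlc
  obtain ⟨m, hm⟩ := hdeg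
  have hc0 : c ≠ 0 := by
    rintro rfl
    exact hD0 (leadingCoeff_eq_zero.mp (by simpa using hc))
  obtain ⟨g, hg⟩ : IsSquare (D.reverse : PowerSeries K) :=
    PowerSeries.isSquare_of_constantCoeff_eq_sq (c := c)
      (by rw [constantCoeff_coe, coeff_zero_reverse, hc]) (by simp [h2, hc0])
  refine ⟨HahnSeries.ofPowerSeries ℤ K g * HahnSeries.single (-(m : ℤ)) 1, ?_⟩
  have hT : HahnSeries.single (D.natDegree : ℤ) (1 : K) *
      HahnSeries.single (-(m : ℤ)) 1 ^ 2 = 1 := by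
    simp [HahnSeries.single_pow, HahnSeries.single_mul_single, hm, two_mul]
  rw [mul_pow, sq (HahnSeries.ofPowerSeries ℤ K g), ← map_mul, ← hg, reverse,
    ← iota_mul_single_eq_ofPowerSeries_reflect le_rfl, mul_assoc, hT, mul_one]
end

section
/- Let K be a field and α ∈ K((T)). For every natural number n there exist p, q ∈ K[X] with q ≠ 0, deg q ≤ n, and orderTop(ι p − α·ι q) > n. In particular, α admits rational approximations (p, q) with orderTop(ι p − α·ι q) exceeding deg q by an arbitrarily large amount. -/
/-!
A Dirichlet (Siegel) pigeonhole argument. The map sending `q` to the coefficients of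
`T, …, T ^ n` in `α * ι q` is linear from the `(n + 1)`-dimensional space of polynomials of
degree `≤ n` to `K ^ n`, so it kills some `q ≠ 0`. Every coefficient of `α * ι q` in a
nonpositive degree is then matched by `ι p`, where `p` is the polynomial part of `α * ι q`,
so `ι p - α * ι q` vanishes in all degrees `≤ n`.
-/

open Polynomial

theorem HahnSeries.lt_orderTop_of_forall_le_coeff_eq_zero {R : Type*} [Zero R]
    {x : HahnSeries ℤ R} {n : ℤ} (h : ∀ j ≤ n, x.coeff j = 0) : (n : WithTop ℤ) < x.orderTop :=
  calc (n : WithTop ℤ) < ((n + 1 : ℤ) : WithTop ℤ) := by exact_mod_cast Int.lt_succ n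
    _ ≤ x.orderTop := le_orderTop_iff_forall.mpr fun j hj =>
      h j (Int.lt_add_one_iff.mp (by exact_mod_cast hj))

theorem Polynomial.exists_ne_zero_natDegree_le_mem_ker {K V : Type*} [Field K] [AddCommGroup V]
    [Module K V] [FiniteDimensional K V] (L : K[X] →ₗ[K] V) {n : ℕ}
    (hV : Module.finrank K V ≤ n) : ∃ q : K[X], q ≠ 0 ∧ q.natDegree ≤ n ∧ L q = 0 := by
  have hlt : Module.finrank K V < Module.finrank K (degreeLT K (n + 1)) := by
    rw [(degreeLTEquiv K (n + 1)).finrank_eq, Module.finrank_fin_fun]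
    omega
  obtain ⟨⟨q, hq⟩, hker, hq0⟩ := Submodule.exists_mem_ne_zero_of_ne_bot
    (LinearMap.ker_ne_bot_of_finrank_lt (f := L ∘ₗ (degreeLT K (n + 1)).subtype) hlt)
  have hq0' : q ≠ 0 := fun h => hq0 (by simp [h])
  refine ⟨q, hq0', ?_, hker⟩
  rw [mem_degreeLT, ← natDegree_lt_iff_degree_lt hq0'] at hq
  omega

section iota

variable {K : Type*} [Field K]

theorem iota_C (c : K) : iota (C c) = HahnSeries.C c := by
  simp [iota]

theorem iota_monomial (k : ℕ) (a : K) :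
    iota (monomial k a) = HahnSeries.single (-(k : ℤ)) a := by
  simp [iota, eval₂_monomial, HahnSeries.single_pow, HahnSeries.single_mul_single]

theorem coeff_iota_neg_natCast (p : K[X]) (k : ℕ) : (iota p).coeff (-(k : ℤ)) = p.coeff k := by
  induction p using Polynomial.induction_on' with
  | add p q hp hq => simp [hp, hq]
  | monomial m a =>
    rw [iota_monomial, coeff_monomial, HahnSeries.coeff_single]
    split_ifs <;> first | rfl | omega

theorem coeff_iota_of_pos (p : K[X]) {j : ℤ} (hj : 0 < j) : (iota p).coeff j = 0 := by
  induction p using Polynomial.induction_on' with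
  | add p q hp hq => simp [hp, hq]
  | monomial m a =>
    rw [iota_monomial, HahnSeries.coeff_single, if_neg]
    omega

end iota

namespace LaurentSeries

variable {K : Type*} [Field K]

noncomputable def polynomialPart (f : LaurentSeries K) : K[X] :=
  ∑ k ∈ Finset.range ((-f.order).toNat + 1), monomial k (f.coeff (-(k : ℤ)))

theorem coeff_iota_polynomialPart (f : LaurentSeries K) {j : ℤ} (hj : j ≤ 0) :
    (iota (polynomialPart f)).coeff j = f.coeff j := by
  obtain ⟨k, rfl⟩ : ∃ k : ℕ, j = -(k : ℤ) := ⟨(-j).toNat, by omega⟩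
  rw [coeff_iota_neg_natCast, polynomialPart, finsetSum_coeff]
  simp only [coeff_monomial, Finset.sum_ite_eq', Finset.mem_range]
  split_ifs
  · rfl
  · exact (HahnSeries.coeff_eq_zero_of_lt_order (by omega)).symm

-- Built by hand: the `K`-module structure that `K⸨X⸩` gets from its `K`-algebra structure is
-- not defeq to the `HahnSeries` one, so `HahnSeries.coeff.linearMap` and `Algebra.lmul` do not
-- compose.
noncomputable def coeffMulIota (α : LaurentSeries K) (j : ℤ) : K[X] →ₗ[K] K where
  toFun q := (α * iota q).coeff j
  map_add' p q := by simp [mul_add]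
  map_smul' c q := by
    rw [RingHom.id_apply, smul_eq_C_mul, map_mul, iota_C, mul_left_comm, HahnSeries.C_mul_eq_smul,
      HahnSeries.coeff_smul, smul_eq_mul]

end LaurentSeries

open LaurentSeries in
/-- Dirichlet-type lemma: every Laurent series admits rational approximations `(p, q)` with
`deg q ≤ n` and `orderTop (ι p - α ι q) > n`, for every `n`. -/
theorem exists_rational_approximation {K : Type*} [Field K]
    (α : LaurentSeries K) (n : ℕ) :
    ∃ p q : Polynomial K, q ≠ 0 ∧ q.natDegree ≤ n ∧
      (n : WithTop ℤ) < (iota p - α * iota q).orderTop := by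
  obtain ⟨q, hq0, hqn, hLq⟩ := exists_ne_zero_natDegree_le_mem_ker
    (LinearMap.pi fun i : Fin n => coeffMulIota α ((i : ℤ) + 1)) (Module.finrank_fin_fun K).le
  refine ⟨polynomialPart (α * iota q), q, hq0, hqn,
    HahnSeries.lt_orderTop_of_forall_le_coeff_eq_zero fun j hj => ?_⟩
  rw [HahnSeries.coeff_sub, sub_eq_zero]
  rcases le_or_gt j 0 with hj0 | hj0
  · exact coeff_iota_polynomialPart _ hj0
  · have hcoeff := congrFun hLq ⟨(j - 1).toNat, by omega⟩
    simp only [LinearMap.pi_apply, Pi.zero_apply, show ((j - 1).toNat : ℤ) + 1 = j by omega]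
      at hcoeff
    rw [coeff_iota_of_pos _ hj0]
    exact hcoeff.symm
end

section
/- (Classification of best approximations) Let K be a field and α ∈ K((T)) with a continued fraction datum (αₙ, aₙ) and canonical convergents (pₙ, qₙ). Let p, q ∈ K[X] with q ≠ 0 be a best approximation of α, i.e. for all p', q' ∈ K[X] with q' ≠ 0: if orderTop(ι p' − α·ι q') ≥ orderTop(ι p − α·ι q) and deg q' ≤ deg q, then p'·q = p·q'. Then there exist a unique n ∈ ℕ and a polynomial r ∈ K[X] with r ≠ 0 and deg r < deg aₙ₊₁ such that p = r·pₙ and q = r·qₙ. In particular, if p and q are coprime then r is a nonzero constant. -/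
open Polynomial

/-!
For any two pairs, `ι(P Q' - P' Q) = ι Q' (ι P - α ι Q) - ι Q (ι P' - α ι Q')`, and the left side
has order `≤ 0` unless `P Q' = P' Q`. So two non-proportional approximations cannot both have
error order larger than the other's denominator degree.

The convergent errors `Eₙ = ι pₙ - α ι qₙ` satisfy `Aₙ₊₁ Eₙ = -Eₙ₋₁`, whence
`ord Eₙ = deg qₙ₊₁`. Choose `n` with `deg qₙ ≤ deg Q < deg qₙ₊₁`. If `(P, Q)` and `(pₙ, qₙ)` were
not proportional, the identity would force `ord (ι P - α ι Q) ≤ deg qₙ < ord Eₙ`, and then the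
best-approximation property makes them proportional after all. Since `pₙ, qₙ` are coprime
(their determinant is `±1`), `(P, Q) = r (pₙ, qₙ)`, and `deg Q < deg qₙ₊₁` is `deg r < deg aₙ₊₁`.
-/

lemma StrictMono.existsUnique_mem_Ico {f : ℕ → ℕ} (hf : StrictMono f) {d : ℕ} (hd : f 0 ≤ d) :
    ∃! n, d ∈ Set.Ico (f n) (f (n + 1)) := by
  have hex : ∃ m, d < f m := ⟨d + 1, Nat.lt_of_lt_of_le (Nat.lt_succ_self d) (hf.id_le _)⟩
  obtain ⟨n, hn⟩ := Nat.exists_eq_add_one_of_ne_zero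
    (fun h => (Nat.find_spec hex).not_ge (h ▸ hd) : Nat.find hex ≠ 0)
  have hlow : f n ≤ d := not_lt.1 (Nat.find_min hex (by omega))
  have hup : d < f (n + 1) := hn ▸ Nat.find_spec hex
  refine ⟨n, ⟨hlow, hup⟩, fun m ⟨hm, hm'⟩ => le_antisymm ?_ ?_⟩
  · exact Nat.lt_succ_iff.1 (hf.lt_iff_lt.1 (hm.trans_lt hup))
  · exact Nat.lt_succ_iff.1 (hf.lt_iff_lt.1 (hlow.trans_lt hm'))

lemma IsCoprime.exists_eq_mul_of_mul_eq_mul {R : Type*} [CommRing R] {p q P Q : R}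
    (h : IsCoprime p q) (hPQ : p * Q = P * q) : ∃ r, P = r * p ∧ Q = r * q := by
  obtain ⟨u, v, huv⟩ := h
  exact ⟨u * P + v * Q, by linear_combination (-P) * huv - v * hPQ,
    by linear_combination (-Q) * huv + u * hPQ⟩

lemma eq_of_two_step_recurrence {R : Type*} [Semiring R] {a u v : ℕ → R} (h0 : u 0 = v 0)
    (h1 : u 1 = v 1) (hu : ∀ n, u (n + 2) = a (n + 2) * u (n + 1) + u n)
    (hv : ∀ n, v (n + 2) = a (n + 2) * v (n + 1) + v n) : u = v := by
  funext n
  induction n using Nat.twoStepInduction with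
  | zero => exact h0
  | one => exact h1
  | more n ih ih' => rw [hu, hv, ih, ih']

section Convergents

variable {R : Type*}

/-- The convergents are shifted by one: `convNum a (n + 1) / convDen a (n + 1)` is `pₙ / qₙ`,
and index `0` holds `p₋₁ = 1`, `q₋₁ = 0`. -/
def convNum [Semiring R] (a : ℕ → R) : ℕ → R
  | 0 => 1
  | 1 => a 0
  | n + 2 => a (n + 1) * convNum a (n + 1) + convNum a n

def convDen [Semiring R] (a : ℕ → R) : ℕ → R
  | 0 => 0
  | 1 => 1
  | n + 2 => a (n + 1) * convDen a (n + 1) + convDen a n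

lemma convNum_mul_convDen_succ_sub [CommRing R] (a : ℕ → R) (n : ℕ) :
    convNum a n * convDen a (n + 1) - convNum a (n + 1) * convDen a n = (-1) ^ n := by
  induction n with
  | zero => simp [convNum, convDen]
  | succ n ih =>
    rw [pow_succ, ← ih]
    simp only [convNum, convDen]
    ring

lemma isCoprime_convNum_convDen [CommRing R] (a : ℕ → R) (n : ℕ) :
    IsCoprime (convNum a n) (convDen a n) := by
  have hsq : ((-1 : R) ^ n) ^ 2 = 1 := by rw [← pow_mul, mul_comm, pow_mul]; simp
  exact ⟨(-1) ^ n * convDen a (n + 1), -((-1) ^ n * convNum a (n + 1)),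
    by linear_combination (-1 : R) ^ n * convNum_mul_convDen_succ_sub a n + hsq⟩

variable [Semiring R] [NoZeroDivisors R] {a : ℕ → R[X]}

lemma natDegree_convDen_add_two_of_le (ha : ∀ n, 0 < (a (n + 1)).natDegree) {n : ℕ}
    (hn : convDen a (n + 1) ≠ 0) (hle : (convDen a n).natDegree ≤ (convDen a (n + 1)).natDegree) :
    (convDen a (n + 2)).natDegree = (a (n + 1)).natDegree + (convDen a (n + 1)).natDegree := by
  have hmul : (a (n + 1) * convDen a (n + 1)).natDegree =
      (a (n + 1)).natDegree + (convDen a (n + 1)).natDegree :=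
    natDegree_mul (ne_zero_of_natDegree_gt (ha n)) hn
  rw [convDen, natDegree_add_eq_left_of_natDegree_lt (by linarith [ha n]), hmul]

variable [Nontrivial R]

lemma convDen_succ_ne_zero_and_natDegree_le (ha : ∀ n, 0 < (a (n + 1)).natDegree) (n : ℕ) :
    convDen a (n + 1) ≠ 0 ∧ (convDen a n).natDegree ≤ (convDen a (n + 1)).natDegree := by
  induction n with
  | zero => simp [convDen]
  | succ n ih =>
    have hdeg := natDegree_convDen_add_two_of_le ha ih.1 ih.2
    refine ⟨ne_zero_of_natDegree_gt (n := 0) ?_, ?_⟩ <;> linarith [ha n]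

lemma convDen_succ_ne_zero (ha : ∀ n, 0 < (a (n + 1)).natDegree) (n : ℕ) :
    convDen a (n + 1) ≠ 0 :=
  (convDen_succ_ne_zero_and_natDegree_le ha n).1

lemma natDegree_convDen_add_two (ha : ∀ n, 0 < (a (n + 1)).natDegree) (n : ℕ) :
    (convDen a (n + 2)).natDegree = (a (n + 1)).natDegree + (convDen a (n + 1)).natDegree :=
  natDegree_convDen_add_two_of_le ha (convDen_succ_ne_zero ha n)
    (convDen_succ_ne_zero_and_natDegree_le ha n).2

lemma strictMono_natDegree_convDen_succ (ha : ∀ n, 0 < (a (n + 1)).natDegree) :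
    StrictMono fun n => (convDen a (n + 1)).natDegree :=
  strictMono_nat_of_lt_succ fun n => by
    simp only [natDegree_convDen_add_two ha n]
    linarith [ha n]

lemma natDegree_mul_convDen_mem_Ico_iff (ha : ∀ n, 0 < (a (n + 1)).natDegree) {r : R[X]}
    (hr : r ≠ 0) (n : ℕ) :
    (r * convDen a (n + 1)).natDegree ∈
        Set.Ico (convDen a (n + 1)).natDegree (convDen a (n + 2)).natDegree ↔
      r.degree < (a (n + 1)).degree := by
  rw [natDegree_mul hr (convDen_succ_ne_zero ha n), natDegree_convDen_add_two ha, Set.mem_Ico,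
    ← natDegree_lt_natDegree_iff hr]
  omega

end Convergents

section Approximation

variable {K : Type*} [Field K]

lemma coeff_iota_neg (f : K[X]) (k : ℕ) : (iota f).coeff (-k) = f.coeff k := by
  simp [iota, eval₂_eq_sum, Polynomial.sum_def, HahnSeries.single_pow, HahnSeries.C_apply,
    HahnSeries.single_mul_single, HahnSeries.coeff_single, eq_comm]

lemma orderTop_iota {f : K[X]} (hf : f ≠ 0) :
    (iota f).orderTop = ((-f.natDegree : ℤ) : WithTop ℤ) := by
  refine le_antisymm (HahnSeries.orderTop_le_of_coeff_ne_zero ?_)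
    (HahnSeries.le_orderTop_iff_forall.2 fun j hj => ?_)
  · rwa [coeff_iota_neg, coeff_natDegree, leadingCoeff_ne_zero]
  · replace hj : j < -f.natDegree := WithTop.coe_lt_coe.1 hj
    obtain ⟨k, rfl⟩ := Int.exists_eq_neg_ofNat (by omega : j ≤ 0)
    rw [coeff_iota_neg]
    exact coeff_eq_zero_of_natDegree_lt (by omega)

lemma orderTop_le_natDegree_of_orderTop_iota_mul_nonpos {Q : K[X]} {x : LaurentSeries K}
    (h : (iota Q * x).orderTop ≤ 0) : x.orderTop ≤ Q.natDegree := by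
  have hQ : Q ≠ 0 := by rintro rfl; simp at h
  rw [HahnSeries.orderTop_mul, orderTop_iota hQ] at h
  generalize x.orderTop = o at h ⊢
  induction o using WithTop.recTopCoe with
  | top => simp at h
  | coe e => norm_cast at h ⊢; omega

noncomputable def approxError (α : LaurentSeries K) (P Q : K[X]) : LaurentSeries K :=
  iota P - α * iota Q

lemma orderTop_approxError_le_or_le (α : LaurentSeries K) {P Q P' Q' : K[X]}
    (h : P * Q' ≠ P' * Q) :
    (approxError α P Q).orderTop ≤ Q'.natDegree ∨
      (approxError α P' Q').orderTop ≤ Q.natDegree := by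
  have hcross : iota (P * Q' - P' * Q) =
      iota Q' * approxError α P Q - iota Q * approxError α P' Q' := by
    simp only [approxError, map_sub, map_mul]; ring
  have hle : min (iota Q' * approxError α P Q).orderTop (iota Q * approxError α P' Q').orderTop
      ≤ 0 := by
    refine HahnSeries.min_orderTop_le_orderTop_sub.trans ?_
    rw [← hcross, orderTop_iota (sub_ne_zero.2 h)]
    exact WithTop.coe_le_coe.2 (by omega)
  rcases min_le_iff.1 hle with h' | h'
  · exact Or.inl (orderTop_le_natDegree_of_orderTop_iota_mul_nonpos h')
  · exact Or.inr (orderTop_le_natDegree_of_orderTop_iota_mul_nonpos h')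

def IsBestApprox (α : LaurentSeries K) (P Q : K[X]) : Prop :=
  ∀ p' q' : K[X], q' ≠ 0 → (approxError α P Q).orderTop ≤ (approxError α p' q').orderTop →
    q'.natDegree ≤ Q.natDegree → p' * Q = P * q'

lemma IsBestApprox.mul_eq_mul {α : LaurentSeries K} {P Q P' Q' : K[X]}
    (hbest : IsBestApprox α P Q) (hQ' : Q' ≠ 0) (hdeg : Q'.natDegree ≤ Q.natDegree)
    (herr : Q.natDegree < (approxError α P' Q').orderTop) : P' * Q = P * Q' := by
  by_contra hne
  rcases orderTop_approxError_le_or_le α (Ne.symm hne) with h | h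
  · refine hne (hbest P' Q' hQ' (h.trans (le_of_lt ?_)) hdeg)
    exact lt_of_le_of_lt (by exact_mod_cast hdeg) herr
  · exact absurd herr (not_lt.2 h)

lemma approxError_convNum_convDen_add_two (α : LaurentSeries K) (a : ℕ → K[X]) (n : ℕ) :
    approxError α (convNum a (n + 2)) (convDen a (n + 2)) =
      iota (a (n + 1)) * approxError α (convNum a (n + 1)) (convDen a (n + 1)) +
        approxError α (convNum a n) (convDen a n) := by
  simp only [approxError, convNum, convDen, map_add, map_mul]
  ring

structure IsContinuedFraction (α : LaurentSeries K) (A : ℕ → LaurentSeries K) (a : ℕ → K[X]) :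
    Prop where
  zero : A 0 = α
  orderTop_sub_pos : ∀ n, 0 < (A n - iota (a n)).orderTop
  mul_sub_eq_one : ∀ n, A (n + 1) * (A n - iota (a n)) = 1

namespace IsContinuedFraction

variable {α : LaurentSeries K} {A : ℕ → LaurentSeries K} {a : ℕ → K[X]}

lemma orderTop_lt_zero (hcf : IsContinuedFraction α A a) (n : ℕ) : (A (n + 1)).orderTop < 0 := by
  have h := congrArg HahnSeries.orderTop (hcf.mul_sub_eq_one n)
  rw [HahnSeries.orderTop_mul, HahnSeries.orderTop_one] at h
  have hpos := hcf.orderTop_sub_pos n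
  generalize (A n - iota (a n)).orderTop = y at h hpos
  generalize (A (n + 1)).orderTop = x at h ⊢
  induction x using WithTop.recTopCoe <;> induction y using WithTop.recTopCoe
  all_goals first | simp at h | (norm_cast at h hpos ⊢; omega)

lemma orderTop_iota_eq (hcf : IsContinuedFraction α A a) (n : ℕ) :
    (iota (a (n + 1))).orderTop = (A (n + 1)).orderTop := by
  rw [← sub_sub_cancel (A (n + 1)) (iota (a (n + 1))), HahnSeries.orderTop_sub]
  exact (hcf.orderTop_lt_zero n).trans (hcf.orderTop_sub_pos (n + 1))

lemma natDegree_pos (hcf : IsContinuedFraction α A a) (n : ℕ) : 0 < (a (n + 1)).natDegree := by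
  have h := hcf.orderTop_iota_eq n ▸ hcf.orderTop_lt_zero n
  have ha : a (n + 1) ≠ 0 := by rintro hz; simp [hz] at h
  rw [orderTop_iota ha] at h
  have : -((a (n + 1)).natDegree : ℤ) < 0 := by exact_mod_cast h
  omega

lemma orderTop_eq_neg_natDegree (hcf : IsContinuedFraction α A a) (n : ℕ) :
    (A (n + 1)).orderTop = ((-(a (n + 1)).natDegree : ℤ) : WithTop ℤ) := by
  rw [← hcf.orderTop_iota_eq, orderTop_iota (ne_zero_of_natDegree_gt (hcf.natDegree_pos n))]

lemma mul_approxError_succ (hcf : IsContinuedFraction α A a) (n : ℕ) :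
    A (n + 1) * approxError α (convNum a (n + 1)) (convDen a (n + 1)) =
      -approxError α (convNum a n) (convDen a n) := by
  induction n with
  | zero =>
    simp only [approxError, convNum, convDen, map_one, map_zero, mul_one, mul_zero, sub_zero]
    linear_combination -hcf.mul_sub_eq_one 0 + A 1 * hcf.zero
  | succ n ih =>
    rw [approxError_convNum_convDen_add_two]
    linear_combination A (n + 2) * ih - approxError α (convNum a (n + 1)) (convDen a (n + 1)) *
      hcf.mul_sub_eq_one (n + 1)

lemma orderTop_approxError (hcf : IsContinuedFraction α A a) (n : ℕ) :
    (approxError α (convNum a n) (convDen a n)).orderTop = (convDen a (n + 1)).natDegree := by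
  induction n with
  | zero => simp [approxError, convNum, convDen]
  | succ n ih =>
    have h := congrArg HahnSeries.orderTop (hcf.mul_approxError_succ n)
    rw [HahnSeries.orderTop_mul, HahnSeries.orderTop_neg, ih, hcf.orderTop_eq_neg_natDegree] at h
    rw [natDegree_convDen_add_two hcf.natDegree_pos]
    generalize (approxError α (convNum a (n + 1)) (convDen a (n + 1))).orderTop = x at h ⊢
    induction x using WithTop.recTopCoe with
    | top => simp at h
    | coe e => norm_cast at h ⊢; omega

end IsContinuedFraction

end Approximation

/-- Classification of best approximations: every best approximation `(P, Q)` of `α` is of the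
form `(r pₙ, r qₙ)` for a unique index `n` and some nonzero `r` with `deg r < deg aₙ₊₁`;
if `P, Q` are coprime then `r` is a nonzero constant. -/
theorem best_approximation_classification {K : Type*} [Field K]
    (α : LaurentSeries K)
    -- continued fraction datum: complete quotients `A` and partial quotients `a`
    (A : ℕ → LaurentSeries K) (a : ℕ → Polynomial K)
    (h0 : A 0 = α)
    (hfrac : ∀ n, 0 < (A n - iota (a n)).orderTop ∧ A (n + 1) * (A n - iota (a n)) = 1)
    -- canonical convergents
    (p q : ℕ → Polynomial K)
    (hp0 : p 0 = a 0) (hq0 : q 0 = 1)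
    (hp1 : p 1 = a 1 * a 0 + 1) (hq1 : q 1 = a 1)
    (hprec : ∀ n, p (n + 2) = a (n + 2) * p (n + 1) + p n)
    (hqrec : ∀ n, q (n + 2) = a (n + 2) * q (n + 1) + q n)
    -- a best approximation (P, Q)
    (P Q : Polynomial K) (hQ : Q ≠ 0)
    (hbest : ∀ p' q' : Polynomial K, q' ≠ 0 →
      (iota P - α * iota Q).orderTop ≤ (iota p' - α * iota q').orderTop →
      q'.natDegree ≤ Q.natDegree → p' * Q = P * q') :
    (∃! n : ℕ, ∃ r : Polynomial K, r ≠ 0 ∧ r.degree < (a (n + 1)).degree ∧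
      P = r * p n ∧ Q = r * q n) ∧
    (IsCoprime P Q → ∀ (n : ℕ) (r : Polynomial K), P = r * p n → Q = r * q n →
      ∃ c : K, c ≠ 0 ∧ r = Polynomial.C c) := by
  have hcf : IsContinuedFraction α A a := ⟨h0, fun n => (hfrac n).1, fun n => (hfrac n).2⟩
  have ha := hcf.natDegree_pos
  obtain rfl : p = fun n => convNum a (n + 1) :=
    eq_of_two_step_recurrence hp0 hp1 hprec fun _ => rfl
  obtain rfl : q = fun n => convDen a (n + 1) :=
    eq_of_two_step_recurrence hq0 (by simp [hq1, convDen]) hqrec fun _ => rfl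
  refine ⟨?_, fun hcop n r hP hQr => ?_⟩
  · obtain ⟨n, hn, hunique⟩ := (strictMono_natDegree_convDen_succ ha).existsUnique_mem_Ico
      (d := Q.natDegree) (by simp [convDen])
    have hcross : convNum a (n + 1) * Q = P * convDen a (n + 1) :=
      IsBestApprox.mul_eq_mul hbest (convDen_succ_ne_zero ha n) hn.1
        (by rw [hcf.orderTop_approxError]; exact_mod_cast hn.2)
    obtain ⟨r, hP, hQr⟩ := (isCoprime_convNum_convDen a (n + 1)).exists_eq_mul_of_mul_eq_mul hcross
    have hr : r ≠ 0 := by rintro rfl; exact hQ (by simpa using hQr)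
    refine ⟨n, ⟨r, hr, (natDegree_mul_convDen_mem_Ico_iff ha hr n).1 (hQr ▸ hn), hP, hQr⟩, ?_⟩
    rintro m ⟨r', hr', hdeg, -, rfl⟩
    exact hunique m ((natDegree_mul_convDen_mem_Ico_iff ha hr' m).2 hdeg)
  · obtain ⟨c, hc, rfl⟩ := Polynomial.isUnit_iff.1 (hcop.isUnit_of_dvd' ⟨_, hP⟩ ⟨_, hQr⟩)
    exact ⟨c, hc.ne_zero, rfl⟩
end

section
/- Let K be a field, let D ∈ K[X] be a polynomial that is not a square in K[X], and let δ ∈ K((T)) satisfy δ² = ι D. Let r, s ∈ K[X] with s ≠ 0 and s dividing D − r², and set α = (ι r + δ)·(ι s)⁻¹. Let a ∈ K[X] satisfy orderTop(α − ι a) > 0. Then α ≠ ι a; and setting α' = (α − ι a)⁻¹ and r' = a·s − r, the polynomial s divides D − r'², the polynomial s' = (D − r'²)/s is nonzero, and α' = (ι r' + δ)·(ι s')⁻¹. -/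
/-!
With `r' = a s - r` one has `α - ι a = (δ - ι r') / ι s`, and
`(δ - ι r') (δ + ι r') = ι (D - r'²) = ι s · ι s'`. Both `ι s` and `ι s'` are nonzero since
`ι` is injective and `D` is not a square, so `δ ≠ ι r'` and inverting gives `α' = (ι r' + δ) / ι s'`.
-/

open Polynomial

theorem coeff_iota_neg_natCast_s13 {K : Type*} [Field K] (f : K[X]) (n : ℕ) :
    (iota f).coeff (-(n : ℤ)) = f.coeff n := by
  have hmonomial (i : ℕ) (c : K) :
      HahnSeries.C c * HahnSeries.single (-1 : ℤ) (1 : K) ^ i =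
        HahnSeries.single (-(i : ℤ)) c := by
    simp [HahnSeries.single_pow, HahnSeries.C_apply, HahnSeries.single_mul_single]
  rw [iota, coe_eval₂RingHom, eval₂_eq_sum, Polynomial.sum_def, HahnSeries.coeff_sum]
  simp only [hmonomial, HahnSeries.coeff_single, neg_inj, Nat.cast_inj]
  simp [eq_comm]

theorem iota_injective {K : Type*} [Field K] : Function.Injective (iota (K := K)) := fun f g h ↦
  Polynomial.ext fun n ↦ by rw [← coeff_iota_neg_natCast_s13, h, coeff_iota_neg_natCast_s13]

theorem dvd_sub_sq_mul_sub {R : Type*} [CommRing R] {D r s : R} (a : R) (h : s ∣ D - r ^ 2) :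
    s ∣ D - (a * s - r) ^ 2 := by
  have : D - (a * s - r) ^ 2 = (D - r ^ 2) + s * (2 * a * r - a ^ 2 * s) := by ring
  exact this ▸ dvd_add h (dvd_mul_right _ _)

section
variable {F : Type*} [Field F] {δ r s a s' : F}

theorem add_mul_inv_sub_eq (hs : s ≠ 0) : (r + δ) * s⁻¹ - a = (δ - (a * s - r)) * s⁻¹ := by
  field_simp
  ring

theorem sub_ne_of_mul_eq_sq_sub_sq (hs : s ≠ 0) (hs' : s' ≠ 0)
    (h : s * s' = δ ^ 2 - (a * s - r) ^ 2) : δ - (a * s - r) ≠ 0 := by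
  intro h0
  have : s * s' = 0 := by rw [h]; linear_combination (δ + (a * s - r)) * h0
  exact mul_ne_zero hs hs' this

theorem add_mul_inv_ne_of_mul_eq (hs : s ≠ 0) (hs' : s' ≠ 0)
    (h : s * s' = δ ^ 2 - (a * s - r) ^ 2) : (r + δ) * s⁻¹ ≠ a := by
  rw [Ne, ← sub_eq_zero, add_mul_inv_sub_eq hs]
  exact mul_ne_zero (sub_ne_of_mul_eq_sq_sub_sq hs hs' h) (inv_ne_zero hs)

theorem inv_add_mul_inv_sub_of_mul_eq (hs : s ≠ 0) (hs' : s' ≠ 0)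
    (h : s * s' = δ ^ 2 - (a * s - r) ^ 2) :
    ((r + δ) * s⁻¹ - a)⁻¹ = (a * s - r + δ) * s'⁻¹ := by
  have hne := sub_ne_of_mul_eq_sq_sub_sq hs hs' h
  rw [add_mul_inv_sub_eq hs]
  field_simp
  linear_combination h
end

theorem continued_fraction_step_rs_general {K : Type*} [Field K]
    (D : Polynomial K) (hD : ¬ ∃ E : Polynomial K, D = E ^ 2)
    (δ : LaurentSeries K) (hδ : δ ^ 2 = iota D)
    (r s : Polynomial K) (hs : s ≠ 0) (hdvd : s ∣ D - r ^ 2)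
    (a : Polynomial K) :
    (iota r + δ) * (iota s)⁻¹ ≠ iota a ∧
    s ∣ D - (a * s - r) ^ 2 ∧
    (D - (a * s - r) ^ 2) / s ≠ 0 ∧
    ((iota r + δ) * (iota s)⁻¹ - iota a)⁻¹ =
      (iota (a * s - r) + δ) * (iota ((D - (a * s - r) ^ 2) / s))⁻¹ := by
  have hdvd' := dvd_sub_sq_mul_sub a hdvd
  have hN : D - (a * s - r) ^ 2 ≠ 0 := fun h ↦ hD ⟨a * s - r, sub_eq_zero.mp h⟩
  have hsplit : s * ((D - (a * s - r) ^ 2) / s) = D - (a * s - r) ^ 2 :=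
    EuclideanDomain.mul_div_cancel' hs hdvd'
  have hs' : (D - (a * s - r) ^ 2) / s ≠ 0 := fun h ↦ hN (by rw [← hsplit, h, mul_zero])
  have hιs := (map_ne_zero_iff _ iota_injective).mpr hs
  have hιs' := (map_ne_zero_iff _ iota_injective).mpr hs'
  have key : iota s * iota ((D - (a * s - r) ^ 2) / s) =
      δ ^ 2 - (iota a * iota s - iota r) ^ 2 := by
    rw [← map_mul, hsplit, hδ, map_sub, map_pow, map_sub, map_mul]
  refine ⟨add_mul_inv_ne_of_mul_eq hιs hιs' key, hdvd', hs', ?_⟩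
  rw [inv_add_mul_inv_sub_of_mul_eq hιs hιs' key, map_sub, map_mul]

/-- One step of the continued fraction algorithm in terms of the polynomial data `(r, s)`:
if `α = (ι r + δ)/ι s` with `s ∣ D - r²`, and `a` is the polynomial part of `α`, then
`α ≠ ι a` and `(α - ι a)⁻¹ = (ι r' + δ)/ι s'` where `r' = a s - r`, `s' = (D - r'²)/s`. -/
theorem continued_fraction_step_rs {K : Type*} [Field K]
    (D : Polynomial K) (hD : ¬ ∃ E : Polynomial K, D = E ^ 2)
    (δ : LaurentSeries K) (hδ : δ ^ 2 = iota D)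
    (r s : Polynomial K) (hs : s ≠ 0) (hdvd : s ∣ D - r ^ 2)
    (a : Polynomial K)
    (ha : 0 < ((iota r + δ) * (iota s)⁻¹ - iota a).orderTop) :
    (iota r + δ) * (iota s)⁻¹ ≠ iota a ∧
    s ∣ D - (a * s - r) ^ 2 ∧
    (D - (a * s - r) ^ 2) / s ≠ 0 ∧
    ((iota r + δ) * (iota s)⁻¹ - iota a)⁻¹ =
      (iota (a * s - r) + δ) * (iota ((D - (a * s - r) ^ 2) / s))⁻¹ :=
  continued_fraction_step_rs_general D hD δ hδ r s hs hdvd a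
end

section
/- Let K be a field of characteristic 2 and let D ∈ K[X]. Then: (1) there exist p, q ∈ K[X] and η ∈ K with q ≠ 0, η ≠ 0 and p² − D·q² = η (η regarded as a constant polynomial) if and only if there exist E ∈ K[X] and r ∈ K with D = E² + r (r regarded as a constant polynomial); and (2) there exist p, q ∈ K[X] and μ ∈ K with q ≠ 0, μ ≠ 0 and p² − D·q² = μ² (as a constant polynomial) if and only if D is a square in K[X]. -/
open Polynomial

private lemma pell_key {K : Type*} [Field K] [CharP K 2] (D p q : Polynomial K) (η : K)
    (hq : q ≠ 0) (h : p ^ 2 - D * q ^ 2 = Polynomial.C η) :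
    ∃ (E : Polynomial K) (r : K), D = E ^ 2 + Polynomial.C r ∧
      (r = 0 ∨ ∃ c : K, c ≠ 0 ∧ r * c ^ 2 = η) := by
  haveI : CharP (Polynomial K) 2 := Polynomial.instCharP 2
  have h2 : (2 : Polynomial K) = 0 := by
    simpa using (CharP.cast_eq_zero (Polynomial K) 2)
  rw [CharTwo.sub_eq_add] at h
  by_cases hdeg : q.degree ≤ 0
  · -- q is a nonzero constant
    have hc' : q = Polynomial.C (q.coeff 0) := Polynomial.eq_C_of_degree_le_zero hdeg
    set c := q.coeff 0 with hcdef
    rw [hc'] at h hq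
    have hc : c ≠ 0 := fun hc0 => hq (by simp [hc0])
    refine ⟨p * Polynomial.C c⁻¹, η * (c⁻¹) ^ 2, ?_, Or.inr ⟨c, hc, by field_simp⟩⟩
    have hcc : (Polynomial.C c : Polynomial K) ≠ 0 := by simpa using hc
    apply mul_right_cancel₀ (pow_ne_zero 2 hcc)
    have hD : D * (Polynomial.C c) ^ 2 = p ^ 2 + Polynomial.C η := by
      linear_combination h - p ^ 2 * h2
    rw [hD]
    have h1 : (Polynomial.C c⁻¹ : Polynomial K) * Polynomial.C c = 1 := by
      rw [← Polynomial.C_mul, inv_mul_cancel₀ hc, Polynomial.C_1]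
    have h1' : (c⁻¹ : K) ^ 2 * c ^ 2 = 1 := by field_simp
    calc (p ^ 2 + Polynomial.C η : Polynomial K)
        = p ^ 2 * ((Polynomial.C c⁻¹) * Polynomial.C c) ^ 2
          + Polynomial.C (η * ((c⁻¹) ^ 2 * c ^ 2)) := by rw [h1, h1']; ring
      _ = ((p * Polynomial.C c⁻¹) ^ 2 + Polynomial.C (η * c⁻¹ ^ 2)) * Polynomial.C c ^ 2 := by
          simp only [Polynomial.C_mul, Polynomial.C_pow]; ring
  · -- q has positive degree
    push_neg at hdeg
    have hq0 : 0 < q.natDegree := Polynomial.natDegree_pos_iff_degree_pos.mpr hdeg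
    set E := p / q with hE
    set s := p % q with hs
    have hpq : q * E + s = p := EuclideanDomain.div_add_mod p q
    have hslt : s.degree < q.degree := EuclideanDomain.mod_lt p hq
    have hp2 : p ^ 2 = q ^ 2 * E ^ 2 + s ^ 2 := by
      rw [← hpq, add_pow_char]
      ring
    have hkey : s ^ 2 + Polynomial.C η = (D + E ^ 2) * q ^ 2 := by
      linear_combination hp2 - h + s ^ 2 * h2
    have hdq2 : (q ^ 2).degree = ((2 * q.natDegree : ℕ) : WithBot ℕ) := by
      rw [Polynomial.degree_eq_natDegree (pow_ne_zero 2 hq), Polynomial.natDegree_pow]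
    have hzero : s ^ 2 + Polynomial.C η = 0 := by
      have hdvd : q ^ 2 ∣ s ^ 2 + Polynomial.C η := ⟨D + E ^ 2, by rw [hkey]; ring⟩
      refine Polynomial.eq_zero_of_dvd_of_degree_lt hdvd ?_
      have h1 : (s ^ 2).degree < (q ^ 2).degree := by
        by_cases hs0 : s = 0
        · rw [hs0, hdq2]
          simp only [ne_eq, OfNat.ofNat_ne_zero, not_false_eq_true, zero_pow,
            Polynomial.degree_zero]
          exact WithBot.bot_lt_coe _
        · have hds2 : (s ^ 2).degree = ((2 * s.natDegree : ℕ) : WithBot ℕ) := by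
            rw [Polynomial.degree_eq_natDegree (pow_ne_zero 2 hs0), Polynomial.natDegree_pow]
          rw [hds2, hdq2]
          have : s.natDegree < q.natDegree := by
            rw [Polynomial.degree_eq_natDegree hs0, Polynomial.degree_eq_natDegree hq] at hslt
            exact_mod_cast hslt
          exact_mod_cast by omega
      have hCη : (Polynomial.C η).degree < (q ^ 2).degree := by
        refine lt_of_le_of_lt Polynomial.degree_C_le ?_
        rw [hdq2]
        exact_mod_cast (by omega : 0 < 2 * q.natDegree)
      calc (s ^ 2 + Polynomial.C η).degree
          ≤ max (s ^ 2).degree (Polynomial.C η).degree := Polynomial.degree_add_le _ _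
        _ < (q ^ 2).degree := max_lt h1 hCη
    have hDE0 : D + E ^ 2 = 0 := by
      have hmul : (D + E ^ 2) * q ^ 2 = 0 := by rw [← hkey, hzero]
      rcases mul_eq_zero.mp hmul with h' | h'
      · exact h'
      · exact absurd h' (pow_ne_zero 2 hq)
    have hDE : D = E ^ 2 := by
      have := eq_neg_of_add_eq_zero_left hDE0
      rwa [CharTwo.neg_eq] at this
    exact ⟨E, 0, by simpa using hDE, Or.inl rfl⟩

/-- The polynomial Pell (unit-norm) equation in characteristic 2: it has a non-trivial
solution iff `D = E² + r` for some polynomial `E` and constant `r`; and it has a non-trivial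
solution with the unit a square iff `D` is a square in `K[X]`. -/
theorem pell_char_two {K : Type*} [Field K] [CharP K 2] (D : Polynomial K) :
    ((∃ (p q : Polynomial K) (η : K), q ≠ 0 ∧ η ≠ 0 ∧
        p ^ 2 - D * q ^ 2 = Polynomial.C η) ↔
      (∃ (E : Polynomial K) (r : K), D = E ^ 2 + Polynomial.C r)) ∧
    ((∃ (p q : Polynomial K) (μ : K), q ≠ 0 ∧ μ ≠ 0 ∧
        p ^ 2 - D * q ^ 2 = Polynomial.C (μ ^ 2)) ↔
      (∃ E : Polynomial K, D = E ^ 2)) := by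
  haveI : CharP (Polynomial K) 2 := Polynomial.instCharP 2
  have h2 : (2 : Polynomial K) = 0 := by
    simpa using (CharP.cast_eq_zero (Polynomial K) 2)
  have hone : (1 : K) ≠ 0 := one_ne_zero
  constructor
  · constructor
    · rintro ⟨p, q, η, hq, hη, h⟩
      obtain ⟨E, r, hD, _⟩ := pell_key D p q η hq h
      exact ⟨E, r, hD⟩
    · rintro ⟨E, r, rfl⟩
      by_cases hr : r = 0
      · refine ⟨E + 1, 1, 1, one_ne_zero, hone, ?_⟩
        subst hr
        simp only [Polynomial.C_0, add_zero, one_pow, mul_one, Polynomial.C_1]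
        linear_combination E * h2
      · refine ⟨E, 1, r, one_ne_zero, hr, ?_⟩
        simp only [one_pow, mul_one]
        linear_combination (- Polynomial.C r) * h2
  · constructor
    · rintro ⟨p, q, μ, hq, hμ, h⟩
      obtain ⟨E, r, hD, hr⟩ := pell_key D p q (μ ^ 2) hq h
      rcases hr with rfl | ⟨c, hc, hrc⟩
      · exact ⟨E, by simpa using hD⟩
      · refine ⟨E + Polynomial.C (μ * c⁻¹), ?_⟩
        rw [hD, CharTwo.add_sq]
        congr 1
        rw [← Polynomial.C_pow]
        congr 1
        field_simp
        linear_combination hrc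
    · rintro ⟨E, rfl⟩
      refine ⟨E + 1, 1, 1, one_ne_zero, hone, ?_⟩
      simp only [one_pow, mul_one, Polynomial.C_1]
      linear_combination E * h2
end
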